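/- Let I = ⟨m₁,…,m_t⟩ be a monomial ideal in S = k[x₁,…,x_n] and for τ ⊆ {1,…,t} let a_τ := deg lcm{m_i : i ∈ τ} ∈ ℤⁿ. Then the graded Betti number β_{r,u}(S/I) vanishes for every u ∈ ℤⁿ that is not of the form a_τ for some τ ⊆ {1,…,t}. -/

import Mathlib

open Finset

/-- An abstract simplicial complex on the vertex set `V`: a collection of subsets
of `V` closed under taking subsets. -/
def IsSimplicialComplex {V : Type*} (Δ : Finset (Finset V)) : Prop :=
  ∀ σ ∈ Δ, ∀ τ ⊆ σ, τ ∈ Δ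

/-- The Alexander dual `Δ* = {σ ⊆ V : V \ σ ∉ Δ}`. -/
def alexDual {V : Type*} [Fintype V] [DecidableEq V] (Δ : Finset (Finset V)) :
    Finset (Finset V) :=
  Finset.univ.filter fun σ => σᶜ ∉ Δ

/-- The link of `σ` in `Δ`: `link_Δ(σ) = {τ ∈ Δ : τ ∪ σ ∈ Δ, τ ∩ σ = ∅}`. -/
def linkOf {V : Type*} [DecidableEq V] (Δ : Finset (Finset V)) (σ : Finset V) :
    Finset (Finset V) :=
  Δ.filter fun τ => τ ∪ σ ∈ Δ ∧ τ ∩ σ = ∅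

/-- The restriction `Δ|_σ = {τ ∈ Δ : τ ⊆ σ}`. -/
def restrict {V : Type*} [DecidableEq V] (Δ : Finset (Finset V)) (σ : Finset V) :
    Finset (Finset V) :=
  Δ.filter fun τ => τ ⊆ σ

/-- The simplicial boundary matrix of a graded family `F` of finite sets of faces:
the matrix of the map `F j → F (j-1)`, `e_τ ↦ ∑_{i ∈ τ} sign(i,τ) e_{τ \ {i}}`,
where `sign(i,τ) = (-1)^(s-1)` if `i` is the `s`-th smallest element of `τ`. -/
noncomputable def bMat (k : Type*) [Field k] {V : Type*} [LinearOrder V] [Fintype V]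
    (F : ℤ → Finset (Finset V)) (j : ℤ) : Matrix (F (j - 1)) (F j) k :=
  Matrix.of fun τ' τ =>
    ∑ i ∈ τ.1, if τ.1.erase i = τ'.1
      then (-1 : k) ^ (τ.1.filter fun a => a < i).card else 0

/-- Dimension of the `j`-th homology of the chain complex with chain spaces spanned
by `F j` and the boundary maps `bMat`: `dim ker ∂_j − dim im ∂_(j+1)`. -/
noncomputable def homDimAt (k : Type*) [Field k] {V : Type*} [LinearOrder V] [Fintype V]
    (F : ℤ → Finset (Finset V)) (j : ℤ) : ℕ :=
  ((F j).card - (bMat k F j).rank) - (bMat k F (j + 1)).rank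

/-- Dimension of the `j`-th cohomology of the dual (transposed) complex:
`dim ker δ^j − dim im δ^(j-1)` where `δ^j = (∂_(j+1))ᵀ`. -/
noncomputable def cohomDimAt (k : Type*) [Field k] {V : Type*} [LinearOrder V] [Fintype V]
    (F : ℤ → Finset (Finset V)) (j : ℤ) : ℕ :=
  ((F j).card - (bMat k F (j + 1)).transpose.rank) - (bMat k F j).transpose.rank

/-- The `j`-dimensional faces of a simplicial complex `Δ` (faces with `j+1` vertices);
the empty face sits in dimension `-1`, yielding *reduced* (co)homology below. -/
def cplxFaces {V : Type*} [LinearOrder V] [Fintype V] (Δ : Finset (Finset V)) (j : ℤ) :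
    Finset (Finset V) :=
  Δ.filter fun τ => (τ.card : ℤ) = j + 1

/-- `dim_k H̃_j(Δ; k)`, reduced simplicial homology with coefficients in `k`. -/
noncomputable def redHomDim (k : Type*) [Field k] {V : Type*} [LinearOrder V] [Fintype V]
    (Δ : Finset (Finset V)) (j : ℤ) : ℕ :=
  homDimAt k (cplxFaces Δ) j

/-- `dim_k H̃^j(Δ; k)`, reduced simplicial cohomology with coefficients in `k`. -/
noncomputable def redCohomDim (k : Type*) [Field k] {V : Type*} [LinearOrder V] [Fintype V]
    (Δ : Finset (Finset V)) (j : ℤ) : ℕ :=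
  cohomDimAt k (cplxFaces Δ) j


/-- The degree-`u` strand of `S/I ⊗ K_•` (`K_•` the Koszul resolution of `k`) for the
monomial ideal `I = ⟨x^(m 0), …, x^(m (t-1))⟩`: in homological degree `j`, a basis is
given by the subsets `τ ⊆ {1,…,n}` with `|τ| = j` such that `u - χ_τ ≥ 0` and the
monomial `x^(u - χ_τ)` does not lie in `I`. -/
def kFacesGen {n t : ℕ} (m : Fin t → Fin n → ℕ) (u : Fin n → ℤ) (j : ℤ) :
    Finset (Finset (Fin n)) :=
  Finset.univ.filter fun τ : Finset (Fin n) =>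
    (τ.card : ℤ) = j ∧ (∀ i, (if i ∈ τ then 1 else 0 : ℤ) ≤ u i) ∧
      ¬ ∃ l : Fin t, ∀ i, (m l i : ℤ) ≤ u i - (if i ∈ τ then 1 else 0)

/-- The graded Betti number `β_{r,u}(S/I) = dim_k Tor_r^S(S/I, k)_u` of the quotient by
the monomial ideal `I = ⟨x^(m 0), …, x^(m (t-1))⟩` in the fine degree `u ∈ ℤⁿ`,
computed via the degree-`u` strand of `S/I` tensored with the Koszul resolution of `k`. -/
noncomputable def bettiGen (k : Type*) [Field k] {n t : ℕ} (m : Fin t → Fin n → ℕ)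
    (r : ℕ) (u : Fin n → ℤ) : ℕ :=
  homDimAt k (kFacesGen m u) (r : ℤ)

/-!
In fine degree `u` the Koszul strand computing `Tor^S(S/I, k)_u` has a basis of the faces
`τ ⊆ {1, …, n}` with `x^(u - τ) ∈ S \ I`. If some `u i < 0` there are no faces. Otherwise let
`a` be the lcm of the generators dividing `x^u`; then `a ≤ u`, and `u ≠ a` gives a coordinate
`i₀` with `u i₀ > m l i₀` for every such generator `m l`. Adding or removing `i₀` then never
changes whether `x^(u - τ)` lies in `I`, so the strand is a cone with apex `i₀`, and the cone
contraction `h(e_τ) = ± e_{τ ∪ i₀}` satisfies `∂h + h∂ = 1`: all homology vanishes.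
-/

theorem Matrix.rank_add_le {k m n : Type*} [Field k] [Fintype m] [Fintype n]
    (A B : Matrix m n k) : (A + B).rank ≤ A.rank + B.rank := by
  rw [Matrix.rank, Matrix.rank, Matrix.rank, Matrix.mulVecLin_add]
  exact (Submodule.finrank_mono (LinearMap.range_add_le _ _)).trans
    (Submodule.finrank_add_le_finrank_add_finrank _ _)

theorem Matrix.card_le_rank_add_rank_of_mul_add_mul_eq_one {k ι κ μ : Type*} [Field k]
    [Fintype ι] [DecidableEq ι] [Fintype κ] [Fintype μ]
    (d : Matrix κ ι k) (d' : Matrix ι μ k) (h : Matrix ι κ k) (h' : Matrix μ ι k)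
    (hdh : d' * h' + h * d = 1) : Fintype.card ι ≤ d.rank + d'.rank :=
  calc Fintype.card ι = (d' * h' + h * d).rank := by rw [hdh, Matrix.rank_one]
    _ ≤ (d' * h').rank + (h * d).rank := Matrix.rank_add_le _ _
    _ ≤ d'.rank + d.rank := add_le_add (Matrix.rank_mul_le_left _ _) (Matrix.rank_mul_le_right _ _)
    _ = d.rank + d'.rank := add_comm _ _

theorem Finset.sum_coe_sort_eq_sum_univ {α M : Type*} [Fintype α] [AddCommMonoid M]
    {s : Finset α} {f : α → M} (hf : ∀ a, f a ≠ 0 → a ∈ s) : ∑ a : s, f a = ∑ a, f a := by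
  rw [Finset.sum_coe_sort]
  exact Finset.sum_subset (Finset.subset_univ s) fun a _ ha => by_contra fun h => ha (hf a h)

section Cone

variable (k : Type*) [Field k] {V : Type*} [LinearOrder V]

def faceSign (τ : Finset V) (i : V) : k :=
  (-1) ^ (τ.filter fun a => a < i).card

def boundaryCoeff (τ' τ : Finset V) : k :=
  ∑ i ∈ τ, if τ.erase i = τ' then faceSign k τ i else 0

def coneCoeff (i₀ : V) (ρ τ : Finset V) : k :=
  if i₀ ∉ τ ∧ ρ = insert i₀ τ then faceSign k τ i₀ else 0

def coneMat (i₀ : V) (s t : Finset (Finset V)) : Matrix s t k :=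
  Matrix.of fun ρ τ => coneCoeff k i₀ ρ.1 τ.1

variable {k}

theorem faceSign_mul_self (τ : Finset V) (i : V) : faceSign k τ i * faceSign k τ i = 1 := by
  rw [faceSign, ← pow_add, Even.neg_one_pow ⟨_, rfl⟩]

theorem faceSign_insert_self (τ : Finset V) (i : V) :
    faceSign k (insert i τ) i = faceSign k τ i := by
  rw [faceSign, faceSign, Finset.filter_insert, if_neg (lt_irrefl i)]

theorem faceSign_erase_self (τ : Finset V) (i : V) :
    faceSign k (τ.erase i) i = faceSign k τ i := by
  rw [faceSign, faceSign, Finset.filter_erase, Finset.erase_eq_of_notMem (by simp)]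

theorem faceSign_insert {τ : Finset V} {i : V} (hi : i ∉ τ) (a : V) :
    faceSign k (insert i τ) a = if i < a then -faceSign k τ a else faceSign k τ a := by
  unfold faceSign
  rw [Finset.filter_insert]
  split_ifs
  · rw [Finset.card_insert_of_notMem (by simp [hi]), pow_succ, mul_neg_one]
  · rfl

theorem faceSign_erase {τ : Finset V} {i : V} (hi : i ∈ τ) (a : V) :
    faceSign k (τ.erase i) a = if i < a then -faceSign k τ a else faceSign k τ a := by
  conv_rhs => rw [← Finset.insert_erase hi, faceSign_insert (Finset.notMem_erase i τ)]
  split_ifs <;> simp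

-- The two ways of moving `a` past the apex `i₀` differ by exactly one transposition.
theorem faceSign_insert_mul_add_faceSign_erase_mul {τ : Finset V} {i₀ a : V}
    (hi₀ : i₀ ∉ τ) (ha : a ∈ τ) :
    faceSign k (insert i₀ τ) a * faceSign k τ i₀ + faceSign k (τ.erase a) i₀ * faceSign k τ a
      = 0 := by
  have hne : i₀ ≠ a := by rintro rfl; exact hi₀ ha
  rw [faceSign_insert hi₀, faceSign_erase ha]
  rcases hne.lt_or_gt with h | h
  · rw [if_pos h, if_neg (asymm h)]; ring
  · rw [if_neg (asymm h), if_pos h]; ring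

theorem boundaryCoeff_insert {τ : Finset V} {i₀ : V} (hi₀ : i₀ ∉ τ) (τ' : Finset V) :
    boundaryCoeff k τ' (insert i₀ τ)
      = (if τ = τ' then faceSign k τ i₀ else 0)
        + ∑ a ∈ τ, if insert i₀ (τ.erase a) = τ' then faceSign k (insert i₀ τ) a else 0 := by
  rw [boundaryCoeff, Finset.sum_insert hi₀, Finset.erase_insert hi₀, faceSign_insert_self]
  congr 1
  refine Finset.sum_congr rfl fun a ha => ?_
  rw [Finset.erase_insert_of_ne (by rintro rfl; exact hi₀ ha)]

theorem boundaryCoeff_of_mem_of_notMem {ρ τ : Finset V} {i₀ : V} (hτ : i₀ ∈ τ) (hρ : i₀ ∉ ρ) :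
    boundaryCoeff k ρ τ = if τ.erase i₀ = ρ then faceSign k τ i₀ else 0 := by
  refine Finset.sum_eq_single_of_mem i₀ hτ fun a _ ha => if_neg fun h => hρ ?_
  exact h ▸ Finset.mem_erase.2 ⟨fun h' => ha h'.symm, hτ⟩

theorem faceSign_mul_boundaryCoeff_erase {τ' τ : Finset V} {i₀ : V} (hi₀ : i₀ ∉ τ) :
    (if i₀ ∈ τ' then faceSign k τ' i₀ * boundaryCoeff k (τ'.erase i₀) τ else 0)
      = ∑ a ∈ τ, if insert i₀ (τ.erase a) = τ'
          then faceSign k (τ.erase a) i₀ * faceSign k τ a else 0 := by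
  have hi₀a : ∀ a, i₀ ∉ τ.erase a := fun a h => hi₀ (Finset.mem_of_mem_erase h)
  by_cases hi₀' : i₀ ∈ τ'
  · rw [if_pos hi₀', boundaryCoeff, Finset.mul_sum]
    refine Finset.sum_congr rfl fun a _ => ?_
    split_ifs with h h' h'
    · rw [← h', faceSign_insert_self]
    · exact absurd (by rw [h, Finset.insert_erase hi₀']) h'
    · exact absurd (by rw [← h', Finset.erase_insert (hi₀a a)]) h
    · rw [mul_zero]
  · rw [if_neg hi₀']
    refine (Finset.sum_eq_zero fun a _ => if_neg ?_).symm
    rintro rfl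
    exact hi₀' (Finset.mem_insert_self _ _)

theorem eq_insert_of_coneCoeff_ne_zero {i₀ : V} {ρ τ : Finset V} (h : coneCoeff k i₀ ρ τ ≠ 0) :
    i₀ ∉ τ ∧ ρ = insert i₀ τ :=
  by_contra fun hc => h (if_neg hc)

variable [Fintype V]

theorem sum_boundaryCoeff_mul_coneCoeff (i₀ : V) (τ' τ : Finset V) :
    ∑ ρ, boundaryCoeff k τ' ρ * coneCoeff k i₀ ρ τ
      = if i₀ ∈ τ then 0 else boundaryCoeff k τ' (insert i₀ τ) * faceSign k τ i₀ := by
  rw [Finset.sum_eq_single (insert i₀ τ) (fun ρ _ hρ => by simp [coneCoeff, hρ])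
    (by simp)]
  by_cases hi₀ : i₀ ∈ τ <;> simp [coneCoeff, hi₀]

theorem sum_coneCoeff_mul_boundaryCoeff (i₀ : V) (τ' τ : Finset V) :
    ∑ ρ, coneCoeff k i₀ τ' ρ * boundaryCoeff k ρ τ
      = if i₀ ∈ τ' then faceSign k τ' i₀ * boundaryCoeff k (τ'.erase i₀) τ else 0 := by
  rw [Finset.sum_eq_single (τ'.erase i₀) (fun ρ _ hρ => ?_) (by simp)]
  · by_cases hi₀ : i₀ ∈ τ'
    · simp [coneCoeff, hi₀, Finset.insert_erase, faceSign_erase_self]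
    · simp [coneCoeff, hi₀, Ne.symm (Finset.insert_ne_self.2 hi₀)]
  · simp only [coneCoeff]
    rw [if_neg, zero_mul]
    rintro ⟨hi₀, rfl⟩
    exact hρ (Finset.erase_insert hi₀).symm

theorem coneCoeff_homotopy (i₀ : V) (τ' τ : Finset V) :
    ∑ ρ, boundaryCoeff k τ' ρ * coneCoeff k i₀ ρ τ + ∑ ρ, coneCoeff k i₀ τ' ρ * boundaryCoeff k ρ τ
      = if τ' = τ then 1 else 0 := by
  rw [sum_boundaryCoeff_mul_coneCoeff, sum_coneCoeff_mul_boundaryCoeff]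
  by_cases hi₀ : i₀ ∈ τ
  · rw [if_pos hi₀, zero_add]
    by_cases hi₀' : i₀ ∈ τ'
    · rw [if_pos hi₀', boundaryCoeff_of_mem_of_notMem hi₀ (Finset.notMem_erase i₀ τ')]
      by_cases h : τ' = τ
      · rw [h, if_pos rfl, if_pos rfl, faceSign_mul_self]
      · rw [if_neg h, if_neg fun h' => h (Finset.erase_injOn' i₀ hi₀' hi₀ h'.symm), mul_zero]
    · rw [if_neg hi₀', if_neg (by rintro rfl; exact hi₀' hi₀)]
  · rw [if_neg hi₀, faceSign_mul_boundaryCoeff_erase hi₀, boundaryCoeff_insert hi₀, add_mul,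
      Finset.sum_mul, add_assoc, ← Finset.sum_add_distrib]
    have hcross : ∀ a ∈ τ, (if insert i₀ (τ.erase a) = τ' then faceSign k (insert i₀ τ) a else 0)
        * faceSign k τ i₀
        + (if insert i₀ (τ.erase a) = τ' then faceSign k (τ.erase a) i₀ * faceSign k τ a else 0)
        = 0 := fun a ha => by
      split_ifs
      · exact faceSign_insert_mul_add_faceSign_erase_mul hi₀ ha
      · rw [zero_mul, add_zero]
    rw [Finset.sum_eq_zero hcross, add_zero]
    obtain rfl | h := eq_or_ne τ' τ
    · rw [if_pos rfl, if_pos rfl, faceSign_mul_self]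
    · rw [if_neg h.symm, if_neg h, zero_mul]

theorem homDimAt_eq_zero_of_homotopy (F : ℤ → Finset (Finset V)) (j : ℤ)
    (h : Matrix (F j) (F (j - 1)) k) (h' : Matrix (F (j + 1)) (F j) k)
    (hdh : ∀ τ' τ : F j, ∑ ρ : F (j + 1), boundaryCoeff k τ'.1 ρ.1 * h' ρ τ
        + ∑ ρ : F (j - 1), h τ' ρ * boundaryCoeff k ρ.1 τ.1 = if τ' = τ then 1 else 0) :
    homDimAt k F j = 0 := by
  let e : F j ≃ F (j + 1 - 1) := Equiv.subtypeEquivRight (by simp)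
  have hcard := Matrix.card_le_rank_add_rank_of_mul_add_mul_eq_one (bMat k F j)
    ((bMat k F (j + 1)).submatrix e id) h h' (by ext τ' τ; exact hdh τ' τ)
  have hrank := Matrix.rank_submatrix_le (bMat k F (j + 1)) e id
  rw [Fintype.card_coe] at hcard
  unfold homDimAt
  omega

theorem homDimAt_eq_zero_of_cone (i₀ : V) {Q : Finset V → Prop}
    (hins : ∀ τ, Q τ → Q (insert i₀ τ)) (hers : ∀ τ, Q τ → Q (τ.erase i₀))
    {F : ℤ → Finset (Finset V)} (hF : ∀ j τ, τ ∈ F j ↔ (τ.card : ℤ) = j ∧ Q τ) (j : ℤ) :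
    homDimAt k F j = 0 := by
  refine homDimAt_eq_zero_of_homotopy F j (coneMat k i₀ _ _) (coneMat k i₀ _ _) fun τ' τ => ?_
  obtain ⟨hτ, hτQ⟩ := (hF j τ).1 τ.2
  obtain ⟨hτ', hτ'Q⟩ := (hF j τ').1 τ'.2
  have hup : ∀ ρ, boundaryCoeff k τ' ρ * coneCoeff k i₀ ρ τ ≠ 0 → ρ ∈ F (j + 1) := by
    intro ρ hρ
    obtain ⟨hi₀, rfl⟩ := eq_insert_of_coneCoeff_ne_zero (right_ne_zero_of_mul hρ)
    refine (hF _ _).2 ⟨?_, hins _ hτQ⟩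
    rw [Finset.card_insert_of_notMem hi₀]
    push_cast
    rw [hτ]
  have hdown : ∀ ρ, coneCoeff k i₀ τ' ρ * boundaryCoeff k ρ τ ≠ 0 → ρ ∈ F (j - 1) := by
    intro ρ hρ
    obtain ⟨hi₀, hτ'ρ⟩ := eq_insert_of_coneCoeff_ne_zero (left_ne_zero_of_mul hρ)
    rw [hτ'ρ, Finset.card_insert_of_notMem hi₀] at hτ'
    have hρQ := hers _ hτ'Q
    rw [hτ'ρ, Finset.erase_insert hi₀] at hρQ
    exact (hF _ _).2 ⟨by omega, hρQ⟩
  simp only [coneMat, Matrix.of_apply]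
  rw [Finset.sum_coe_sort_eq_sum_univ hup, Finset.sum_coe_sort_eq_sum_univ hdown,
    coneCoeff_homotopy]
  exact if_congr Subtype.ext_iff.symm rfl rfl

end Cone

section Strand

variable {σ ι : Type*} {m : ι → σ → ℕ} {u : σ → ℤ}

theorem exists_coord_gt_of_ne_lcm [Fintype ι] (hu₀ : ∀ i, 0 ≤ u i)
    (hu : ∀ T : Finset ι, u ≠ fun i => ((T.sup fun l => m l i : ℕ) : ℤ)) :
    ∃ i₀, 1 ≤ u i₀ ∧ ∀ l, (∀ i, (m l i : ℤ) ≤ u i) → (m l i₀ : ℤ) < u i₀ := by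
  classical
  set T := Finset.univ.filter fun l => ∀ i, (m l i : ℤ) ≤ u i
  have hle : ∀ i, ((T.sup fun l => m l i : ℕ) : ℤ) ≤ u i := fun i => by
    have : (T.sup fun l => m l i) ≤ (u i).toNat :=
      Finset.sup_le fun l hl => by have := (Finset.mem_filter.1 hl).2 i; omega
    have := hu₀ i
    omega
  obtain ⟨i₀, hlt⟩ : ∃ i₀, ((T.sup fun l => m l i₀ : ℕ) : ℤ) < u i₀ := by
    by_contra! h
    exact hu T (funext fun i => le_antisymm (h i) (hle i))
  refine ⟨i₀, by omega, fun l hl => lt_of_le_of_lt ?_ hlt⟩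
  exact_mod_cast Finset.le_sup (f := fun l => m l i₀) (Finset.mem_filter.2 ⟨Finset.mem_univ l, hl⟩)

variable [DecidableEq σ]

variable (m u) in
def IsStrandFace (τ : Finset σ) : Prop :=
  (∀ i, (if i ∈ τ then 1 else 0 : ℤ) ≤ u i) ∧
    ¬ ∃ l : ι, ∀ i, (m l i : ℤ) ≤ u i - (if i ∈ τ then 1 else 0)

theorem isStrandFace_insert {τ : Finset σ} {i₀ : σ} (h : IsStrandFace m u τ) (hi₀ : 1 ≤ u i₀) :
    IsStrandFace m u (insert i₀ τ) := by
  refine ⟨fun i => ?_, fun ⟨l, hl⟩ => h.2 ⟨l, fun i => ?_⟩⟩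
  · by_cases hi : i = i₀
    · simp [hi, hi₀]
    · simpa [hi] using h.1 i
  · have hle : (if i ∈ τ then 1 else 0 : ℤ) ≤ if i ∈ insert i₀ τ then 1 else 0 := by
      split_ifs <;> simp_all
    linarith [hl i]

theorem isStrandFace_erase {τ : Finset σ} {i₀ : σ} (h : IsStrandFace m u τ)
    (hi₀ : ∀ l, (∀ i, (m l i : ℤ) ≤ u i) → (m l i₀ : ℤ) < u i₀) :
    IsStrandFace m u (τ.erase i₀) := by
  refine ⟨fun i => ?_, fun ⟨l, hl⟩ => h.2 ⟨l, fun i => ?_⟩⟩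
  · have := h.1 i
    by_cases hi : i ∈ τ.erase i₀
    · simpa [hi, Finset.mem_of_mem_erase hi] using this
    · simp only [hi, if_false]
      split_ifs at this <;> omega
  · by_cases hi : i = i₀
    · have hlu : ∀ i, (m l i : ℤ) ≤ u i := fun i => (hl i).trans (by split_ifs <;> omega)
      have := hi₀ l hlu
      subst hi
      split_ifs <;> omega
    · simpa [hi] using hl i

theorem not_isStrandFace_of_neg {i : σ} (hi : u i < 0) (τ : Finset σ) : ¬ IsStrandFace m u τ :=
  fun h => by
    have := h.1 i
    split_ifs at this <;> omega

theorem exists_apex_of_ne_lcm [Fintype ι]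
    (hu : ∀ T : Finset ι, u ≠ fun i => ((T.sup fun l => m l i : ℕ) : ℤ)) :
    ∃ i₀, ∀ τ, IsStrandFace m u τ → IsStrandFace m u (insert i₀ τ) ∧
      IsStrandFace m u (τ.erase i₀) := by
  by_cases hneg : ∃ i, u i < 0
  · obtain ⟨i, hi⟩ := hneg
    exact ⟨i, fun τ h => absurd h (not_isStrandFace_of_neg hi τ)⟩
  · push Not at hneg
    obtain ⟨i₀, hi₀, hlt⟩ := exists_coord_gt_of_ne_lcm hneg hu
    exact ⟨i₀, fun τ h => ⟨isStrandFace_insert h hi₀, isStrandFace_erase h hlt⟩⟩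

end Strand

theorem mem_kFacesGen {n t : ℕ} {m : Fin t → Fin n → ℕ} {u : Fin n → ℤ} {j : ℤ}
    {τ : Finset (Fin n)} : τ ∈ kFacesGen m u j ↔ (τ.card : ℤ) = j ∧ IsStrandFace m u τ := by
  simp [kFacesGen, IsStrandFace]

/-- for a monomial ideal `I = ⟨m_1, …, m_t⟩` in `S = k[x_1, …, x_n]`,
with `a_τ := deg lcm{m_i : i ∈ τ} ∈ ℤⁿ` for `τ ⊆ {1,…,t}`, the graded Betti number
`β_{r,u}(S/I)` vanishes for every fine degree `u ∈ ℤⁿ` that is not of the form `a_τ`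
for some `τ ⊆ {1,…,t}`. -/
theorem betti_vanishing_outside_lcm_degrees (k : Type*) [Field k] {n t : ℕ}
    (m : Fin t → Fin n → ℕ) (u : Fin n → ℤ)
    (hu : ∀ τ : Finset (Fin t), u ≠ fun i => ((τ.sup fun l => m l i : ℕ) : ℤ)) :
    ∀ r : ℕ, bettiGen k m r u = 0 := by
  intro r
  obtain ⟨i₀, hi₀⟩ := exists_apex_of_ne_lcm hu
  exact homDimAt_eq_zero_of_cone i₀ (fun τ h => (hi₀ τ h).1) (fun τ h => (hi₀ τ h).2)
    (fun _ _ => mem_kFacesGen) r
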